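/- Let α, γ, δ > 0 and let G(x,y,p,q,κ) be the 5×5 symmetric matrix with entries g_xx = g_yy = α/y², g_pp = γ(x²+y²)/y + δq², g_qq = γ/y + δp², g_pq = g_qp = γx/y − δpq, g_pκ = g_κp = δq, g_qκ = g_κq = −δp, g_κκ = δ, all other entries zero. For (a,b,c,d) with ad − bc = 1, (λ,μ) ∈ ℝ² and κ₀ ∈ ℝ, define Φ : {(x,y,p,q,κ) : y > 0} → ℝ⁵ by Φ(x,y,p,q,κ) = (x₁,y₁,p₁,q₁,κ₁) with Λ = (cx+d)²+(cy)², x₁ = ((ax+b)(cx+d)+acy²)/Λ, y₁ = y/Λ, p₁ = (λd−μc)+dp−cq, q₁ = (−λb+μa)−bp+aq, κ₁ = κ₀ + κ + λq − μp. Then y₁ > 0 and (DΦ(P))ᵀ · G(Φ(P)) · DΦ(P) = G(P) for every P with y > 0. That is, the metric ds² = α(dx²+dy²)/y² + (γ/y)[(x²+y²)dp² + dq² + 2x dp dq] + δ(dκ − p dq + q dp)² on the extended Siegel–Jacobi upper half-plane X̃₁^J is invariant under the action of the real Jacobi group G^J₁(ℝ). -/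

import Mathlib

/-!
With `τ = x + iy` the metric is `α |dτ|² / y² + (γ / y) |τ dp + dq|² + δ (dκ - p dq + q dp)²`.
Under the Jacobi group `dτ₁ = dτ / (cτ + d)²`, `y₁ = y / |cτ + d|²` and
`τ₁ dp₁ + dq₁ = (τ dp + dq) / (cτ + d)`, while `dκ - p dq + q dp` is invariant, so each of the
three summands is invariant. The first identity is the complex derivative of the Möbius map,
which gives the `(x, y)`-block of the Jacobian through the Cauchy–Riemann equations.
-/

open Matrix

/-- The Jacobian matrix of a map `Φ : ℝⁿ → ℝⁿ` at a point `P`. -/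
noncomputable def jacobianMat {n : ℕ} (Φ : (Fin n → ℝ) → (Fin n → ℝ)) (P : Fin n → ℝ) :
    Matrix (Fin n) (Fin n) ℝ :=
  fun i j => fderiv ℝ (fun Q => Φ Q i) P (Pi.single j 1)

/-- The matrix of the invariant metric
`ds² = α(dx²+dy²)/y² + (γ/y)[(x²+y²)dp² + dq² + 2x dp dq] + δ(dκ − p dq + q dp)²`
on the extended Siegel–Jacobi upper half-plane, coordinates `P = (x,y,p,q,κ)`. -/
noncomputable def extG (α γ δ : ℝ) (P : Fin 5 → ℝ) : Matrix (Fin 5) (Fin 5) ℝ :=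
  !![α / (P 1) ^ 2, 0, 0, 0, 0;
     0, α / (P 1) ^ 2, 0, 0, 0;
     0, 0, γ * ((P 0) ^ 2 + (P 1) ^ 2) / (P 1) + δ * (P 3) ^ 2,
       γ * (P 0) / (P 1) - δ * (P 2) * (P 3), δ * (P 3);
     0, 0, γ * (P 0) / (P 1) - δ * (P 2) * (P 3),
       γ / (P 1) + δ * (P 2) ^ 2, -(δ * (P 2));
     0, 0, δ * (P 3), -(δ * (P 2)), δ]

/-- The action of the element `(a,b,c,d,λ,μ,κ₀)` of the real Jacobi group
`G^J₁(ℝ)` on the extended Siegel–Jacobi upper half-plane, coordinates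
`(x,y,p,q,κ)`. -/
noncomputable def jPhiExt (a b c d l m k₀ : ℝ) (P : Fin 5 → ℝ) : Fin 5 → ℝ :=
  ![((a * P 0 + b) * (c * P 0 + d) + a * c * (P 1) ^ 2) /
      ((c * P 0 + d) ^ 2 + (c * P 1) ^ 2),
    P 1 / ((c * P 0 + d) ^ 2 + (c * P 1) ^ 2),
    (l * d - m * c) + d * P 2 - c * P 3,
    (-(l * b) + m * a) - b * P 2 + a * P 3,
    k₀ + P 4 + l * P 3 - m * P 2]

open Complex

noncomputable def tauCoord : (Fin 5 → ℝ) →L[ℝ] ℂ :=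
  ofRealCLM.comp (ContinuousLinearMap.proj 0) + I • ofRealCLM.comp (ContinuousLinearMap.proj 1)

lemma tauCoord_apply (P : Fin 5 → ℝ) : tauCoord P = P 0 + P 1 * I := by
  simp [tauCoord, mul_comm]

@[simp] lemma tauCoord_re (P : Fin 5 → ℝ) : (tauCoord P).re = P 0 := by simp [tauCoord_apply]

@[simp] lemma tauCoord_im (P : Fin 5 → ℝ) : (tauCoord P).im = P 1 := by simp [tauCoord_apply]

noncomputable def mobius (a b c d : ℝ) (z : ℂ) : ℂ := (a * z + b) / (c * z + d)

lemma hasDerivAt_mobius {a b c d : ℝ} (h : a * d - b * c = 1) {z : ℂ} (hz : c * z + d ≠ 0) :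
    HasDerivAt (mobius a b c d) ((c * z + d) ^ 2)⁻¹ z := by
  have hlin (r s : ℝ) : HasDerivAt (fun w : ℂ => r * w + s) r z := by
    simpa using ((hasDerivAt_id z).const_mul (r : ℂ)).add_const (s : ℂ)
  refine ((hlin a b).div (hlin c d) hz).congr_deriv ?_
  have hC : (a : ℂ) * d - b * c = 1 := by exact_mod_cast h
  field_simp
  linear_combination hC

lemma mobius_im {a b c d : ℝ} (h : a * d - b * c = 1) (z : ℂ) :
    (mobius a b c d z).im = z.im / normSq (c * z + d) := by
  simp only [mobius, div_im, ← sub_div]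
  congr 1
  simp only [add_im, add_re, mul_im, mul_re, ofReal_re, ofReal_im, zero_mul, add_zero, sub_zero]
  linear_combination z.im * h

lemma mul_mobius_sub {a b c d : ℝ} (h : a * d - b * c = 1) {z : ℂ} (hz : c * z + d ≠ 0) :
    d * mobius a b c d z - b = z / (c * z + d) := by
  have hC : (a : ℂ) * d - b * c = 1 := by exact_mod_cast h
  rw [mobius, eq_div_iff hz, sub_mul, mul_assoc, div_mul_cancel₀ _ hz]
  linear_combination z * hC

lemma sub_mul_mobius {a b c d : ℝ} (h : a * d - b * c = 1) {z : ℂ} (hz : c * z + d ≠ 0) :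
    a - c * mobius a b c d z = (c * z + d)⁻¹ := by
  have hC : (a : ℂ) * d - b * c = 1 := by exact_mod_cast h
  refine eq_inv_of_mul_eq_one_left ?_
  rw [mobius, sub_mul, mul_assoc, div_mul_cancel₀ _ hz]
  linear_combination hC

lemma ofReal_mul_add_ne_zero {a b c d : ℝ} (h : a * d - b * c = 1) {z : ℂ} (hz : 0 < z.im) :
    (c : ℂ) * z + d ≠ 0 := by
  intro h0
  have hc : c = 0 := by
    have him : c * z.im = 0 := by simpa using congrArg im h0
    exact (mul_eq_zero.mp him).resolve_right hz.ne'
  have hd : d = 0 := by simpa [hc] using congrArg re h0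
  simp [hc, hd] at h

lemma jPhiExt_zero_eq_re (a b c d l m k₀ : ℝ) (P : Fin 5 → ℝ) :
    jPhiExt a b c d l m k₀ P 0 = (mobius a b c d (tauCoord P)).re := by
  simp only [jPhiExt, Fin.isValue, cons_val_zero, mobius, div_re, add_re, mul_re, ofReal_re,
    tauCoord_re, ofReal_im, tauCoord_im, zero_mul, sub_zero, normSq_apply, add_im, mul_im, add_zero,
    ← add_div]
  ring

lemma jPhiExt_one_eq_div (a b c d l m k₀ : ℝ) (P : Fin 5 → ℝ) :
    jPhiExt a b c d l m k₀ P 1 = P 1 / normSq (c * tauCoord P + d) := by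
  simp only [jPhiExt, Fin.isValue, cons_val_one, cons_val_zero, normSq_apply, add_re, mul_re,
    ofReal_re, tauCoord_re, ofReal_im, tauCoord_im, zero_mul, sub_zero, add_im, mul_im, add_zero]
  ring

lemma jPhiExt_one_eq_im {a b c d : ℝ} (h : a * d - b * c = 1) (l m k₀ : ℝ) (P : Fin 5 → ℝ) :
    jPhiExt a b c d l m k₀ P 1 = (mobius a b c d (tauCoord P)).im := by
  rw [jPhiExt_one_eq_div, mobius_im h, tauCoord_im]

lemma tauCoord_jPhiExt {a b c d : ℝ} (h : a * d - b * c = 1) (l m k₀ : ℝ) (P : Fin 5 → ℝ) :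
    tauCoord (jPhiExt a b c d l m k₀ P) = mobius a b c d (tauCoord P) := by
  rw [tauCoord_apply, jPhiExt_zero_eq_re, jPhiExt_one_eq_im h, re_add_im]

noncomputable def jPhiExtJac (a b c d l m : ℝ) (P : Fin 5 → ℝ) : Matrix (Fin 5) (Fin 5) ℝ :=
  let μ : ℂ := ((c * tauCoord P + d) ^ 2)⁻¹
  !![μ.re, -μ.im, 0, 0, 0;
     μ.im, μ.re, 0, 0, 0;
     0, 0, d, -c, 0;
     0, 0, -b, a, 0;
     0, 0, -m, l, 1]

lemma jacobianMat_eq_of_hasFDerivAt {n : ℕ} {Φ : (Fin n → ℝ) → Fin n → ℝ} {P : Fin n → ℝ}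
    {L : Fin n → (Fin n → ℝ) →L[ℝ] ℝ} (hL : ∀ i, HasFDerivAt (fun Q => Φ Q i) (L i) P) :
    jacobianMat Φ P = of fun i j => L i (Pi.single j 1) := by
  ext i j
  rw [jacobianMat, (hL i).fderiv, of_apply]

lemma jacobianMat_jPhiExt {a b c d : ℝ} (h : a * d - b * c = 1) (l m k₀ : ℝ) {P : Fin 5 → ℝ}
    (hP : c * tauCoord P + d ≠ 0) :
    jacobianMat (jPhiExt a b c d l m k₀) P = jPhiExtJac a b c d l m P := by
  have hτ : HasFDerivAt (fun Q => mobius a b c d (tauCoord Q))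
      (((c * tauCoord P + d) ^ 2)⁻¹ • tauCoord) P :=
    (hasDerivAt_mobius h hP).comp_hasFDerivAt P tauCoord.hasFDerivAt
  let π (k : Fin 5) : (Fin 5 → ℝ) →L[ℝ] ℝ := ContinuousLinearMap.proj k
  have hπ (k : Fin 5) : HasFDerivAt (fun Q : Fin 5 → ℝ => Q k) (π k) P := hasFDerivAt_apply k P
  have hL : ∀ i, HasFDerivAt (fun Q => jPhiExt a b c d l m k₀ Q i)
      (![reCLM.comp (((c * tauCoord P + d) ^ 2)⁻¹ • tauCoord),
        imCLM.comp (((c * tauCoord P + d) ^ 2)⁻¹ • tauCoord),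
        d • π 2 - c • π 3, -(b • π 2) + a • π 3, π 4 + l • π 3 - m • π 2] i) P := by
    intro i
    fin_cases i
    · simpa only [Fin.zero_eta, cons_val_zero, jPhiExt_zero_eq_re, Function.comp_def,
        reCLM_apply] using reCLM.hasFDerivAt.comp P hτ
    · simpa only [Fin.mk_one, cons_val_one, cons_val_zero, jPhiExt_one_eq_im h, Function.comp_def,
        imCLM_apply] using imCLM.hasFDerivAt.comp P hτ
    · exact (((hπ 2).const_mul d).const_add _).sub ((hπ 3).const_mul c)
    · exact (((hπ 2).const_mul b).const_sub _).add ((hπ 3).const_mul a)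
    · exact (((hπ 4).const_add k₀).add ((hπ 3).const_mul l)).sub ((hπ 2).const_mul m)
  rw [jacobianMat_eq_of_hasFDerivAt hL]
  ext i j
  fin_cases i <;> fin_cases j <;> simp [jPhiExtJac, π, tauCoord_apply]

section NormSqForm

variable {m n : Type*} [Fintype m]

lemma transpose_mul_vecMulVec_self_mul {R : Type*} [CommSemiring R] (J : Matrix m n R)
    (v : m → R) : Jᵀ * vecMulVec v v * J = vecMulVec (v ᵥ* J) (v ᵥ* J) := by
  rw [mul_vecMulVec, vecMulVec_mul, mulVec_transpose]

/-- The real quadratic form `v ↦ ‖ω ⬝ᵥ v‖²` of a complex covector `ω`. -/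
noncomputable def normSqForm (ω : n → ℂ) : Matrix n n ℝ :=
  vecMulVec (fun i => (ω i).re) (fun i => (ω i).re)
    + vecMulVec (fun i => (ω i).im) (fun i => (ω i).im)

lemma normSqForm_smul (z : ℂ) (ω : n → ℂ) : normSqForm (z • ω) = normSq z • normSqForm ω := by
  ext i j
  simp only [normSqForm, Matrix.add_apply, Matrix.smul_apply, vecMulVec_apply, Pi.smul_apply,
    smul_eq_mul, mul_re, mul_im, normSq_apply]
  ring

lemma transpose_mul_normSqForm_mul (J : Matrix m n ℝ) (ω : m → ℂ) :
    Jᵀ * normSqForm ω * J = normSqForm (ω ᵥ* J.map ofReal) := by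
  have hre : (fun j => (ω ᵥ* J.map ofReal) j |>.re) = (fun i => (ω i).re) ᵥ* J := by
    ext j; simp [vecMul, dotProduct, re_sum]
  have him : (fun j => (ω ᵥ* J.map ofReal) j |>.im) = (fun i => (ω i).im) ᵥ* J := by
    ext j; simp [vecMul, dotProduct, im_sum]
  rw [normSqForm, normSqForm, Matrix.mul_add, Matrix.add_mul, transpose_mul_vecMulVec_self_mul,
    transpose_mul_vecMulVec_self_mul, hre, him]

end NormSqForm

def dTau : Fin 5 → ℂ := ![1, I, 0, 0, 0]

noncomputable def tauDpAddDq (P : Fin 5 → ℝ) : Fin 5 → ℂ := ![0, 0, tauCoord P, 1, 0]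

def contactForm (P : Fin 5 → ℝ) : Fin 5 → ℝ := ![0, 0, P 3, -P 2, 1]

lemma extG_eq (α γ δ : ℝ) (P : Fin 5 → ℝ) :
    extG α γ δ P = (α / P 1 ^ 2) • normSqForm dTau + (γ / P 1) • normSqForm (tauDpAddDq P)
      + δ • vecMulVec (contactForm P) (contactForm P) := by
  ext i j
  fin_cases i <;> fin_cases j <;>
    simp only [extG, normSqForm, dTau, tauDpAddDq, contactForm, tauCoord_apply, Matrix.add_apply,
      Matrix.smul_apply, smul_eq_mul, vecMulVec_apply, of_apply, cons_val', cons_val, cons_val_zero,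
      cons_val_one, cons_val_fin_one, Fin.zero_eta, Fin.mk_one, Fin.reduceFinMk, Fin.isValue,
      add_re, add_im, mul_re, mul_im, ofReal_re, ofReal_im, I_re, I_im, one_re, one_im, zero_re,
      zero_im] <;>
    ring

lemma dTau_vecMul_jPhiExtJac (a b c d l m : ℝ) (P : Fin 5 → ℝ) :
    dTau ᵥ* (jPhiExtJac a b c d l m P).map ofReal = ((c * tauCoord P + d) ^ 2)⁻¹ • dTau := by
  unfold jPhiExtJac
  generalize ((c * tauCoord P + d) ^ 2)⁻¹ = μ
  ext j
  fin_cases j <;> apply Complex.ext <;> simp [dTau, vecMul, dotProduct, Fin.sum_univ_five]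

lemma tauDpAddDq_jPhiExt_vecMul {a b c d : ℝ} (h : a * d - b * c = 1) (l m k₀ : ℝ)
    {P : Fin 5 → ℝ} (hP : c * tauCoord P + d ≠ 0) :
    tauDpAddDq (jPhiExt a b c d l m k₀ P) ᵥ* (jPhiExtJac a b c d l m P).map ofReal
      = (c * tauCoord P + d)⁻¹ • tauDpAddDq P := by
  have hdp := mul_mobius_sub h hP
  have hdq := sub_mul_mobius h hP
  rw [tauDpAddDq, tauCoord_jPhiExt h]
  ext j
  fin_cases j <;>
    simp only [tauDpAddDq, jPhiExtJac, vecMul, dotProduct, Fin.sum_univ_five, map_apply, of_apply,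
      cons_val', cons_val, cons_val_zero, cons_val_one, cons_val_fin_one, Fin.zero_eta, Fin.mk_one,
      Fin.reduceFinMk, Fin.isValue, ofReal_zero, ofReal_one, ofReal_neg, mul_zero, zero_mul,
      mul_one, one_mul, mul_neg, neg_zero, add_zero, zero_add, Pi.smul_apply, smul_eq_mul]
  · linear_combination hdp
  · linear_combination hdq

lemma contactForm_jPhiExt_vecMul {a b c d : ℝ} (h : a * d - b * c = 1) (l m k₀ : ℝ)
    (P : Fin 5 → ℝ) :
    contactForm (jPhiExt a b c d l m k₀ P) ᵥ* jPhiExtJac a b c d l m P = contactForm P := by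
  ext j
  fin_cases j <;>
    simp only [contactForm, jPhiExt, jPhiExtJac, vecMul, dotProduct, Fin.sum_univ_five, of_apply,
      cons_val', cons_val, cons_val_zero, cons_val_one, cons_val_fin_one, Fin.zero_eta, Fin.mk_one,
      Fin.reduceFinMk, Fin.isValue, mul_zero, zero_mul, mul_one, one_mul, mul_neg, neg_zero,
      add_zero, zero_add]
  · linear_combination (m + P 3) * h
  · linear_combination (-(l + P 2)) * h

lemma transpose_jPhiExtJac_mul_extG_mul {a b c d : ℝ} (h : a * d - b * c = 1) (l m k₀ : ℝ)
    {P : Fin 5 → ℝ} (hτ : c * tauCoord P + d ≠ 0) (α γ δ : ℝ) :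
    (jPhiExtJac a b c d l m P)ᵀ * extG α γ δ (jPhiExt a b c d l m k₀ P) * jPhiExtJac a b c d l m P
      = extG α γ δ P := by
  have hN : normSq (c * tauCoord P + d) ≠ 0 := (normSq_pos.mpr hτ).ne'
  rw [extG_eq, extG_eq]
  simp only [Matrix.add_mul, Matrix.mul_add, Matrix.smul_mul, Matrix.mul_smul,
    transpose_mul_normSqForm_mul, transpose_mul_vecMulVec_self_mul, dTau_vecMul_jPhiExtJac,
    tauDpAddDq_jPhiExt_vecMul h l m k₀ hτ, contactForm_jPhiExt_vecMul h, normSqForm_smul,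
    smul_smul, jPhiExt_one_eq_div, map_inv₀, map_pow]
  congr 3 <;> field_simp

theorem extended_metric_invariant_general (α γ δ a b c d l m k₀ : ℝ)
    (h : a * d - b * c = 1) :
    ∀ P : Fin 5 → ℝ, 0 < P 1 →
      0 < jPhiExt a b c d l m k₀ P 1 ∧
      (jacobianMat (jPhiExt a b c d l m k₀) P)ᵀ *
          extG α γ δ (jPhiExt a b c d l m k₀ P) *
          jacobianMat (jPhiExt a b c d l m k₀) P = extG α γ δ P := by
  intro P hy
  have hτ : c * tauCoord P + d ≠ 0 := ofReal_mul_add_ne_zero h (by rwa [tauCoord_im])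
  refine ⟨?_, ?_⟩
  · rw [jPhiExt_one_eq_div]
    exact div_pos hy (normSq_pos.mpr hτ)
  · rw [jacobianMat_jPhiExt h l m k₀ hτ]
    exact transpose_jPhiExtJac_mul_extG_mul h l m k₀ hτ α γ δ

/-- The metric `ds² = α(dx²+dy²)/y² + (γ/y)[(x²+y²)dp² + dq² + 2x dp dq]
+ δ(dκ − p dq + q dp)²` on the extended Siegel–Jacobi upper half-plane `X̃₁^J` is
invariant under the action of the real Jacobi group `G^J₁(ℝ)`. -/
theorem extended_metric_invariant (α γ δ a b c d l m k₀ : ℝ)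
    (hα : 0 < α) (hγ : 0 < γ) (hδ : 0 < δ) (h : a * d - b * c = 1) :
    ∀ P : Fin 5 → ℝ, 0 < P 1 →
      0 < jPhiExt a b c d l m k₀ P 1 ∧
      (jacobianMat (jPhiExt a b c d l m k₀) P)ᵀ *
          extG α γ δ (jPhiExt a b c d l m k₀ P) *
          jacobianMat (jPhiExt a b c d l m k₀) P = extG α γ δ P :=
  extended_metric_invariant_general α γ δ a b c d l m k₀ h
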